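/- (Multivariate Nielsen-type multiplication theorem, m even) For every even positive integer m, every positive integer k, every natural number n with n ≥ k, every vector a = (a₁, …, a_k) of nonzero real numbers, and every real number x, m^{k-n} · (-1/2)^k · ( n! / (n-k)! ) · ( ∏_{i=1}^{k} a_i ) · E_{n-k}^{(k)}(m x | a) = Σ_{l₁=0}^{m-1} ⋯ Σ_{l_k=0}^{m-1} (-1)^{l₁ + ⋯ + l_k} B_n^{(k)}( x + (1/m) Σ_{i=1}^{k} a_i l_i | a ). -/

import Mathlib

/-!
Multiplying the Bernoulli generating function by `∏ⱼ (e^{aⱼt} - 1)` turns it into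
`(∏ⱼ aⱼ) tᵏ e^{yt}`, so the alternating sum over `l` becomes
`(∏ⱼ aⱼ) tᵏ e^{xt} ∏ⱼ Σ_{i<m} (-e^{aⱼt/m})ⁱ`. Since `m` is even, each geometric factor times
`e^{aⱼt/m} + 1` is `1 - e^{aⱼt}`, and `∏ⱼ (e^{aⱼt/m} + 1)` is exactly what the Euler generating
function at `(mx, t/m)` cancels. Both sides are therefore the same power series after
multiplication by a nonzero factor; comparing coefficients of `tⁿ` gives the identity.
-/

open PowerSeries Finset

theorem geom_sum_neg_mul_add_one {R : Type*} [CommRing R] {m : ℕ} (hm : Even m) (u : R) :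
    (∑ i ∈ range m, (-u) ^ i) * (u + 1) = 1 - u ^ m := by
  rw [← hm.neg_pow, ← geom_sum_mul_neg]
  ring

namespace PowerSeries

section CommRing

variable {A : Type*} [CommRing A] [Algebra ℚ A]

theorem rescale_exp_pow (c : A) (i : ℕ) :
    rescale c (exp A) ^ i = rescale (i * c) (exp A) := by
  rw [← map_pow, exp_pow_eq_rescale_exp, rescale_rescale]

theorem prod_rescale_exp {ι : Type*} (s : Finset ι) (c : ι → A) :
    ∏ j ∈ s, rescale (c j) (exp A) = rescale (∑ j ∈ s, c j) (exp A) := by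
  induction s using Finset.cons_induction with
  | empty => simp
  | cons j s hj ih => rw [prod_cons, ih, exp_mul_exp_eq_exp_add, sum_cons]

theorem rescale_exp_sub_one_ne_zero {c : A} (hc : c ≠ 0) : rescale c (exp A) - 1 ≠ 0 := by
  intro h
  exact hc (by simpa [coeff_exp, coeff_one] using congrArg (coeff 1) h)

theorem rescale_exp_add_one_ne_zero [Nontrivial A] (c : A) : rescale c (exp A) + 1 ≠ 0 := by
  intro h
  have h0 := congrArg (coeff 0) h
  rw [map_add, coeff_rescale, coeff_exp] at h0
  have htwo : (2 : A) ≠ 0 := by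
    simpa only [map_ofNat, map_zero] using (algebraMap ℚ A).injective.ne (two_ne_zero' ℚ)
  exact htwo (by simpa [one_add_one_eq_two] using h0)

theorem sum_neg_one_pow_mul_rescale_exp {k m : ℕ} (a : Fin k → A) (c x : A) :
    ∑ l : Fin k → Fin m, C ((-1 : A) ^ ∑ i, (l i : ℕ)) *
        rescale (x + c * ∑ i, a i * ((l i : ℕ) : A)) (exp A) =
      rescale x (exp A) * ∏ j, ∑ i ∈ range m, (-rescale (c * a j) (exp A)) ^ i := by
  simp_rw [← Fin.sum_univ_eq_sum_range]
  rw [prod_univ_sum, Fintype.piFinset_univ, mul_sum]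
  refine sum_congr rfl fun l _ => ?_
  have hexponent : c * ∑ i, a i * ((l i : ℕ) : A) = ∑ i, ((l i : ℕ) : A) * (c * a i) := by
    rw [mul_sum]
    exact sum_congr rfl fun i _ => by ring
  simp_rw [neg_pow (rescale _ _), prod_mul_distrib, prod_pow_eq_pow_sum, rescale_exp_pow,
    prod_rescale_exp, hexponent, ← exp_mul_exp_eq_exp_add x, map_pow, map_neg, map_one]
  ring

end CommRing

variable {K : Type*} [Field K] [CharZero K] {k m : ℕ} (a : Fin k → K)

theorem alternating_sum_bernoulli_series_mul (hm0 : m ≠ 0) (hm : Even m) (x : K)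
    (Bs : K → K⟦X⟧)
    (hB : ∀ y, Bs y * ∏ j, (rescale (a j) (exp K) - 1) =
      C (∏ j, a j) * X ^ k * rescale y (exp K)) :
    (∑ l : Fin k → Fin m, C ((-1 : K) ^ ∑ i, (l i : ℕ)) *
        Bs (x + 1 / m * ∑ i, a i * ((l i : ℕ) : K))) *
        (∏ j, (rescale (a j) (exp K) - 1)) * ∏ j, (rescale (1 / m * a j) (exp K) + 1) =
      (-1) ^ k * C (∏ j, a j) * X ^ k * rescale x (exp K) *
        ∏ j, (rescale (a j) (exp K) - 1) := by
  set u : Fin k → K⟦X⟧ := fun j => rescale (1 / m * a j) (exp K)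
  have hu : ∀ j, u j ^ m = rescale (a j) (exp K) := fun j => by
    rw [rescale_exp_pow]
    field_simp
  have hexp : ∑ l : Fin k → Fin m, C ((-1 : K) ^ ∑ i, (l i : ℕ)) *
        rescale (x + 1 / m * ∑ i, a i * ((l i : ℕ) : K)) (exp K) =
      rescale x (exp K) * ∏ j, ∑ i ∈ range m, (-u j) ^ i :=
    sum_neg_one_pow_mul_rescale_exp a _ x
  have hgeom : (∏ j, ∑ i ∈ range m, (-u j) ^ i) * ∏ j, (u j + 1) =
      (-1) ^ k * ∏ j, (rescale (a j) (exp K) - 1) := by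
    rw [← prod_mul_distrib]
    simp_rw [geom_sum_neg_mul_add_one hm, hu, ← neg_sub _ (1 : K⟦X⟧)]
    rw [prod_neg, card_univ, Fintype.card_fin]
  have hBP : (∑ l : Fin k → Fin m, C ((-1 : K) ^ ∑ i, (l i : ℕ)) *
        Bs (x + 1 / m * ∑ i, a i * ((l i : ℕ) : K))) * ∏ j, (rescale (a j) (exp K) - 1) =
      C (∏ j, a j) * X ^ k * (rescale x (exp K) * ∏ j, ∑ i ∈ range m, (-u j) ^ i) := by
    rw [sum_mul, ← hexp, mul_sum]
    refine sum_congr rfl fun l _ => ?_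
    rw [mul_assoc, hB]
    ring
  linear_combination (∏ j, (u j + 1)) * hBP + C (∏ j, a j) * X ^ k * rescale x (exp K) * hgeom

theorem rescale_euler_series_mul (hm0 : m ≠ 0) (x : K) (Es : K → K⟦X⟧)
    (hE : ∀ y, Es y * ∏ j, (rescale (a j) (exp K) + 1) = C (2 ^ k) * rescale y (exp K)) :
    rescale (1 / m : K) (Es (m * x)) * ∏ j, (rescale (1 / m * a j) (exp K) + 1) =
      2 ^ k * rescale x (exp K) := by
  have h := congrArg (rescale (1 / m : K)) (hE (m * x))
  simp_rw [map_mul, map_prod, map_add, map_one, rescale_rescale, map_pow, map_ofNat] at h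
  simp_rw [mul_comm (a _) (1 / (m : K)), show (m : K) * x * (1 / m) = x by field_simp] at h
  exact h

theorem alternating_sum_bernoulli_series_eq_euler_series (hm0 : m ≠ 0) (hm : Even m)
    (ha : ∀ j, a j ≠ 0) (x : K) (Bs Es : K → K⟦X⟧)
    (hB : ∀ y, Bs y * ∏ j, (rescale (a j) (exp K) - 1) =
      C (∏ j, a j) * X ^ k * rescale y (exp K))
    (hE : ∀ y, Es y * ∏ j, (rescale (a j) (exp K) + 1) = C (2 ^ k) * rescale y (exp K)) :
    ∑ l : Fin k → Fin m, C ((-1 : K) ^ ∑ i, (l i : ℕ)) *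
        Bs (x + 1 / m * ∑ i, a i * ((l i : ℕ) : K)) =
      C ((-(1 / 2)) ^ k * ∏ j, a j) * X ^ k * rescale (1 / m : K) (Es (m * x)) := by
  have hP : ∏ j, (rescale (a j) (exp K) - 1) ≠ 0 :=
    prod_ne_zero_iff.mpr fun j _ => rescale_exp_sub_one_ne_zero (ha j)
  have hQ : ∏ j, (rescale (1 / m * a j) (exp K) + 1) ≠ 0 :=
    prod_ne_zero_iff.mpr fun j _ => rescale_exp_add_one_ne_zero _
  have hconst : C ((-(1 / 2) : K) ^ k) * 2 ^ k = (-1) ^ k := by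
    rw [← map_ofNat C 2, ← map_pow, ← map_mul, ← mul_pow]
    norm_num
  refine mul_right_cancel₀ (mul_ne_zero hP hQ) ?_
  rw [← mul_assoc, alternating_sum_bernoulli_series_mul a hm0 hm x Bs hB, map_mul]
  linear_combination
    -C ((-(1 / 2) : K) ^ k) * C (∏ j, a j) * X ^ k * (∏ j, (rescale (a j) (exp K) - 1)) *
      rescale_euler_series_mul a hm0 x Es hE
    - C (∏ j, a j) * X ^ k * rescale x (exp K) * (∏ j, (rescale (a j) (exp K) - 1)) * hconst

end PowerSeries

theorem statement_19_general (m : ℕ) (hm0 : 0 < m) (hm : Even m) (n k : ℕ)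
    (hkn : k ≤ n) (a : Fin k → ℝ) (ha : ∀ j, a j ≠ 0) (x : ℝ)
    (B E : ℝ → ℕ → ℝ)
    (hB : ∀ y : ℝ, (PowerSeries.mk fun i => B y i / (i.factorial : ℝ)) *
        (∏ j, (PowerSeries.rescale (a j) (PowerSeries.exp ℝ) - 1)) =
      PowerSeries.C (∏ j, a j) * PowerSeries.X ^ k *
        PowerSeries.rescale y (PowerSeries.exp ℝ))
    (hE : ∀ y : ℝ, (PowerSeries.mk fun i => E y i / (i.factorial : ℝ)) *
        (∏ j, (PowerSeries.rescale (a j) (PowerSeries.exp ℝ) + 1)) =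
      PowerSeries.C ((2 : ℝ) ^ k) * PowerSeries.rescale y (PowerSeries.exp ℝ)) :
    (m : ℝ) ^ ((k : ℤ) - (n : ℤ)) * (-(1 / 2) : ℝ) ^ k *
        ((n.factorial : ℝ) / ((n - k).factorial : ℝ)) * (∏ i, a i) *
        E ((m : ℝ) * x) (n - k) =
      ∑ l : Fin k → Fin m,
        (-1 : ℝ) ^ (∑ i, (l i : ℕ)) *
          B (x + (1 / (m : ℝ)) * ∑ i, a i * ((l i : ℕ) : ℝ)) n := by
  have h := congrArg (coeff n) (alternating_sum_bernoulli_series_eq_euler_series a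
    hm0.ne' hm ha x _ _ hB hE)
  obtain ⟨d, rfl⟩ := Nat.exists_eq_add_of_le' hkn
  simp only [map_sum, coeff_C_mul, coeff_mk, mul_assoc, coeff_X_pow_mul, coeff_rescale] at h
  have hzpow : (m : ℝ) ^ ((k : ℤ) - ((d + k : ℕ) : ℤ)) = (1 / m) ^ d := by
    rw [Nat.cast_add, sub_add_cancel_right, zpow_neg, zpow_natCast, one_div, inv_pow]
  rw [Nat.add_sub_cancel, hzpow]
  calc _ = ((d + k).factorial : ℝ) * ((-(1 / 2)) ^ k * ((∏ j, a j) *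
          ((1 / m) ^ d * (E (m * x) d / d.factorial)))) := by ring
    _ = _ := by
      rw [← h, mul_sum]
      refine sum_congr rfl fun l _ => ?_
      field_simp

/-- Multivariate Nielsen-type multiplication theorem (`m` even):
`m^{k-n} (-1/2)^k (n!/(n-k)!) (∏ᵢ aᵢ) E_{n-k}^{(k)}(m x | a)
  = Σ_{l₁,…,l_k=0}^{m-1} (-1)^{l₁+⋯+l_k} B_n^{(k)}(x + (1/m) Σ_i a_i l_i | a)`,
where `B_n^{(k)}(x|a)` has generating function `e^{x t} ∏_j (a_j t/(e^{a_j t}-1))`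
and `E_n^{(k)}(x|a)` has generating function `e^{x t} ∏_j (2/(e^{a_j t}+1))`. -/
theorem statement_19 (m : ℕ) (hm0 : 0 < m) (hm : Even m) (n k : ℕ) (hk : 0 < k)
    (hkn : k ≤ n) (a : Fin k → ℝ) (ha : ∀ j, a j ≠ 0) (x : ℝ)
    (B E : ℝ → ℕ → ℝ)
    (hB : ∀ y : ℝ, (PowerSeries.mk fun i => B y i / (i.factorial : ℝ)) *
        (∏ j, (PowerSeries.rescale (a j) (PowerSeries.exp ℝ) - 1)) =
      PowerSeries.C (∏ j, a j) * PowerSeries.X ^ k *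
        PowerSeries.rescale y (PowerSeries.exp ℝ))
    (hE : ∀ y : ℝ, (PowerSeries.mk fun i => E y i / (i.factorial : ℝ)) *
        (∏ j, (PowerSeries.rescale (a j) (PowerSeries.exp ℝ) + 1)) =
      PowerSeries.C ((2 : ℝ) ^ k) * PowerSeries.rescale y (PowerSeries.exp ℝ)) :
    (m : ℝ) ^ ((k : ℤ) - (n : ℤ)) * (-(1 / 2) : ℝ) ^ k *
        ((n.factorial : ℝ) / ((n - k).factorial : ℝ)) * (∏ i, a i) *
        E ((m : ℝ) * x) (n - k) =
      ∑ l : Fin k → Fin m,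
        (-1 : ℝ) ^ (∑ i, (l i : ℕ)) *
          B (x + (1 / (m : ℝ)) * ∑ i, a i * ((l i : ℕ) : ℝ)) n :=
  statement_19_general m hm0 hm n k hkn a ha x B E hB hE
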